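/- For the infinite-data FQE iterates under memoryless confounding, assuming 0 < α_min ≤ 1 ≤ β_max, for every h ∈ {1,…,H} and all (s,a): H − h − Σ_{i=1}^{H−h} α_min^{−i} ≤ Q_h(s,a) − f̂_h(s,a) ≤ H − h − Σ_{i=1}^{H−h} β_max^{−i}. In particular, for every state s: H − 1 − Σ_{i=1}^{H−1} α_min^{−i} ≤ V_1(s) − Σ_a π_e(a|s) f̂_1(s,a) ≤ H − 1 − Σ_{i=1}^{H−1} β_max^{−i}. -/

import Mathlib

open Finset

noncomputable section

variable {S U A : Type*}

/-- Marginalized (observed) behavior policy `π_b(a|s) = Σ_u P(u|s) π_b(a|s,u)`. -/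
def piMarg [Fintype U] (Pu : S → U → ℝ) (pib : S → U → A → ℝ) (s : S) (a : A) : ℝ :=
  ∑ u, Pu s u * pib s u a

/-- Marginalized transition kernel `P(s'|s,a) = Σ_u P(u|s) T(s'|s,u,a)`. -/
def margKer [Fintype U] (Pu : S → U → ℝ) (T : S → U → A → S → ℝ)
    (s : S) (a : A) (s' : S) : ℝ :=
  ∑ u, Pu s u * T s u a s'

/-- Confounded observed kernel `P^b(s'|s,a) = Σ_u P(u|s)·(π_b(a|s,u)/π_b(a|s))·T(s'|s,u,a)`. -/
def confKer [Fintype U] (Pu : S → U → ℝ) (pib : S → U → A → ℝ) (T : S → U → A → S → ℝ)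
    (s : S) (a : A) (s' : S) : ℝ :=
  ∑ u, Pu s u * (pib s u a / piMarg Pu pib s a) * T s u a s'

/-- Bellman value of the evaluation policy under kernel `P`, indexed by the number of
remaining steps: `Vaux P r πe k = V_{H+1-k}` (so `Vaux _ _ _ 0 = V_{H+1} = 0`). -/
def Vaux [Fintype S] [Fintype A] (P : S → A → S → ℝ) (r : S → A → ℝ) (pie : S → A → ℝ) :
    ℕ → S → ℝ
  | 0 => fun _ => 0
  | (k + 1) => fun s => ∑ a, pie s a * (r s a + ∑ s', P s a s' * Vaux P r pie k s')

/-- Bellman Q-value with `k` remaining steps *after* the current one: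
`Qaux P r πe k = Q_{H-k}`, i.e. `Q_h(s,a) = r(s,a) + Σ_{s'} P(s'|s,a) V_{h+1}(s')`. -/
def Qaux [Fintype S] [Fintype A] (P : S → A → S → ℝ) (r : S → A → ℝ) (pie : S → A → ℝ)
    (k : ℕ) (s : S) (a : A) : ℝ :=
  r s a + ∑ s', P s a s' * Vaux P r pie k s'

/-- Infinite-data FQE iterates indexed by remaining steps: `fqeAux Pb r πe k = f̂_{H+1-k}`,
so `f̂_{H+1} = 0` and `f̂_h(s,a) = r(s,a) + Σ_{s'} P^b(s'|s,a) Σ_{a'} π_e(a'|s') f̂_{h+1}(s',a')`. -/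
def fqeAux [Fintype S] [Fintype A] (Pb : S → A → S → ℝ) (r : S → A → ℝ) (pie : S → A → ℝ) :
    ℕ → S → A → ℝ
  | 0 => fun _ _ => 0
  | (k + 1) => fun s a => r s a + ∑ s', Pb s a s' * ∑ a', pie s' a' * fqeAux Pb r pie k s' a'

private lemma geom_step (c : ℝ) (k : ℕ) :
    (((k+1 : ℕ)) : ℝ) - ∑ i ∈ Icc 1 (k+1), c ^ i
      = (1 - c) * ((k:ℝ)+1) + c * (((k:ℕ):ℝ) - ∑ i ∈ Icc 1 k, c ^ i) := by
  have hIcc : ∀ n : ℕ, ∑ i ∈ Icc 1 n, c ^ i = c * ∑ i ∈ range n, c ^ i := by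
    intro n
    induction n with
    | zero => simp
    | succ m ih =>
        rw [Finset.sum_Icc_succ_top (by omega : 1 ≤ m + 1), ih, Finset.sum_range_succ]
        ring
  have h : ∑ i ∈ Icc 1 (k+1), c ^ i = c + c * ∑ i ∈ Icc 1 k, c ^ i := by
    rw [hIcc, hIcc, geom_sum_succ]
    ring
  rw [h]; push_cast; ring

/-- Error bounds for infinite-data FQE under memoryless confounding, with sensitivity
bounds `0 < α_min ≤ 1 ≤ β_max`:
`H − h − Σ_{i=1}^{H−h} α_min^{−i} ≤ Q_h(s,a) − f̂_h(s,a) ≤ H − h − Σ_{i=1}^{H−h} β_max^{−i}`,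
and the corresponding bounds on `V_1(s) − Σ_a π_e(a|s) f̂_1(s,a)`. -/
theorem fqe_error_bounds
    [Fintype S] [Fintype U] [Fintype A] [Nonempty S] [Nonempty U] [Nonempty A]
    (H : ℕ) (hH : 1 ≤ H)
    (Pu : S → U → ℝ) (hPu0 : ∀ s u, 0 ≤ Pu s u) (hPu1 : ∀ s, ∑ u, Pu s u = 1)
    (T : S → U → A → S → ℝ) (hT0 : ∀ s u a s', 0 ≤ T s u a s')
    (hT1 : ∀ s u a, ∑ s', T s u a s' = 1)
    (r : S → A → ℝ) (hr0 : ∀ s a, 0 ≤ r s a) (hr1 : ∀ s a, r s a ≤ 1)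
    (pib : S → U → A → ℝ) (hpib0 : ∀ s u a, 0 < pib s u a)
    (hpib1 : ∀ s u, ∑ a, pib s u a = 1)
    (pie : S → A → ℝ) (hpie0 : ∀ s a, 0 ≤ pie s a) (hpie1 : ∀ s, ∑ a, pie s a = 1)
    (αmin βmax : ℝ) (hα0 : 0 < αmin) (hα1 : αmin ≤ 1) (hβ1 : 1 ≤ βmax)
    (hsens : ∀ s u a, αmin ≤ piMarg Pu pib s a / pib s u a ∧
      piMarg Pu pib s a / pib s u a ≤ βmax) :
    (∀ h : ℕ, 1 ≤ h → h ≤ H → ∀ s a,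
      ((H - h : ℕ) : ℝ) - ∑ i ∈ Icc 1 (H - h), αmin⁻¹ ^ i ≤
          Qaux (margKer Pu T) r pie (H - h) s a -
            fqeAux (confKer Pu pib T) r pie (H + 1 - h) s a ∧
        Qaux (margKer Pu T) r pie (H - h) s a -
            fqeAux (confKer Pu pib T) r pie (H + 1 - h) s a ≤
          ((H - h : ℕ) : ℝ) - ∑ i ∈ Icc 1 (H - h), βmax⁻¹ ^ i) ∧
    (∀ s : S,
      ((H - 1 : ℕ) : ℝ) - ∑ i ∈ Icc 1 (H - 1), αmin⁻¹ ^ i ≤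
          Vaux (margKer Pu T) r pie H s -
            ∑ a, pie s a * fqeAux (confKer Pu pib T) r pie H s a ∧
        Vaux (margKer Pu T) r pie H s -
            ∑ a, pie s a * fqeAux (confKer Pu pib T) r pie H s a ≤
          ((H - 1 : ℕ) : ℝ) - ∑ i ∈ Icc 1 (H - 1), βmax⁻¹ ^ i) := by

  set P := margKer Pu T with hPdef
  set Pb := confKer Pu pib T with hPbdef
  -- positivity of the marginal policy
  have hpim_pos : ∀ s a, 0 < piMarg Pu pib s a := by
    intro s a
    obtain ⟨h1, _⟩ := hsens s (Classical.arbitrary U) a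
    have hp := hpib0 s (Classical.arbitrary U) a
    nlinarith [(le_div_iff₀ hp).mp h1, mul_pos hα0 hp]
  have hP0 : ∀ s a s', 0 ≤ P s a s' := by
    intro s a s'
    exact Finset.sum_nonneg fun u _ => mul_nonneg (hPu0 s u) (hT0 s u a s')
  have hPb0 : ∀ s a s', 0 ≤ Pb s a s' := by
    intro s a s'
    refine Finset.sum_nonneg fun u _ => ?_
    exact mul_nonneg (mul_nonneg (hPu0 s u)
      (div_nonneg (hpib0 s u a).le (hpim_pos s a).le)) (hT0 s u a s')
  have hPsum : ∀ s a, ∑ s', P s a s' = 1 := by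
    intro s a
    rw [hPdef]; unfold margKer
    rw [Finset.sum_comm]
    simp_rw [← Finset.mul_sum, hT1]
    simpa using hPu1 s
  -- pointwise kernel comparisons
  have hratio : ∀ s u a, pib s u a / piMarg Pu pib s a ≤ αmin⁻¹ ∧
      βmax⁻¹ ≤ pib s u a / piMarg Pu pib s a := by
    intro s u a
    have hp := hpib0 s u a
    have hm := hpim_pos s a
    have h1 : αmin * pib s u a ≤ piMarg Pu pib s a := (le_div_iff₀ hp).mp (hsens s u a).1
    have h2 : piMarg Pu pib s a ≤ βmax * pib s u a := (div_le_iff₀ hp).mp (hsens s u a).2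
    have hβ0 : (0:ℝ) < βmax := lt_of_lt_of_le one_pos hβ1
    constructor
    · rw [div_le_iff₀ hm, inv_mul_eq_div, le_div_iff₀ hα0]
      nlinarith
    · rw [le_div_iff₀ hm, inv_mul_eq_div, div_le_iff₀ hβ0]
      nlinarith
  have hPb_le : ∀ s a s', Pb s a s' ≤ αmin⁻¹ * P s a s' := by
    intro s a s'
    rw [hPbdef, hPdef]; unfold confKer margKer
    rw [Finset.mul_sum]
    refine Finset.sum_le_sum fun u _ => ?_
    have := (hratio s u a).1
    nlinarith [mul_nonneg (hPu0 s u) (hT0 s u a s'), hPu0 s u, hT0 s u a s']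
  have hPb_ge : ∀ s a s', βmax⁻¹ * P s a s' ≤ Pb s a s' := by
    intro s a s'
    rw [hPbdef, hPdef]; unfold confKer margKer
    rw [Finset.mul_sum]
    refine Finset.sum_le_sum fun u _ => ?_
    have := (hratio s u a).2
    nlinarith [mul_nonneg (hPu0 s u) (hT0 s u a s'), hPu0 s u, hT0 s u a s']
  -- bounds on Vaux
  have hV : ∀ k s, 0 ≤ Vaux P r pie k s ∧ Vaux P r pie k s ≤ (k : ℝ) := by
    intro k
    induction k with
    | zero => intro s; simp [Vaux]
    | succ k ih =>
        intro s
        constructor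
        · refine Finset.sum_nonneg fun a _ => mul_nonneg (hpie0 s a) ?_
          have : 0 ≤ ∑ s', P s a s' * Vaux P r pie k s' :=
            Finset.sum_nonneg fun s' _ => mul_nonneg (hP0 s a s') (ih s').1
          linarith [hr0 s a]
        · have hterm : ∀ a, pie s a * (r s a + ∑ s', P s a s' * Vaux P r pie k s')
              ≤ pie s a * ((k:ℝ) + 1) := by
            intro a
            have h1 : ∑ s', P s a s' * Vaux P r pie k s' ≤ (k:ℝ) := by
              calc ∑ s', P s a s' * Vaux P r pie k s'
                  ≤ ∑ s', P s a s' * (k:ℝ) :=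
                    Finset.sum_le_sum fun s' _ =>
                      mul_le_mul_of_nonneg_left (ih s').2 (hP0 s a s')
                _ = (k:ℝ) := by rw [← Finset.sum_mul, hPsum s a, one_mul]
            exact mul_le_mul_of_nonneg_left (by linarith [hr1 s a]) (hpie0 s a)
          calc Vaux P r pie (k+1) s ≤ ∑ a, pie s a * ((k:ℝ) + 1) :=
                Finset.sum_le_sum fun a _ => hterm a
            _ = ((k:ℝ) + 1) := by rw [← Finset.sum_mul, hpie1 s, one_mul]
            _ = ((k+1 : ℕ) : ℝ) := by push_cast; ring
  -- nonnegativity of fqe iterates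
  have hf0 : ∀ k s a, 0 ≤ fqeAux Pb r pie k s a := by
    intro k
    induction k with
    | zero => intro s a; simp [fqeAux]
    | succ k ih =>
        intro s a
        have : 0 ≤ ∑ s', Pb s a s' * ∑ a', pie s' a' * fqeAux Pb r pie k s' a' :=
          Finset.sum_nonneg fun s' _ => mul_nonneg (hPb0 s a s')
            (Finset.sum_nonneg fun a' _ => mul_nonneg (hpie0 s' a') (ih s' a'))
        simp only [fqeAux]
        linarith [hr0 s a]
  have hVQ : ∀ k s, Vaux P r pie (k+1) s = ∑ a, pie s a * Qaux P r pie k s a := by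
    intro k s; rfl
  -- main induction
  have key : ∀ k s a,
      ((k:ℕ):ℝ) - ∑ i ∈ Icc 1 k, αmin⁻¹ ^ i
          ≤ Qaux P r pie k s a - fqeAux Pb r pie (k+1) s a ∧
      Qaux P r pie k s a - fqeAux Pb r pie (k+1) s a
          ≤ ((k:ℕ):ℝ) - ∑ i ∈ Icc 1 k, βmax⁻¹ ^ i := by
    intro k
    induction k with
    | zero =>
        intro s a
        simp [Qaux, Vaux, fqeAux]
    | succ k ih =>
        intro s a
        have hβ0 : (0:ℝ) < βmax := lt_of_lt_of_le one_pos hβ1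
        have hαi1 : (1:ℝ) ≤ αmin⁻¹ := one_le_inv_iff₀.mpr ⟨hα0, hα1⟩
        have hβi1 : βmax⁻¹ ≤ 1 := inv_le_one_of_one_le₀ hβ1
        have hβi0 : (0:ℝ) ≤ βmax⁻¹ := inv_nonneg.mpr hβ0.le
        have hαi0 : (0:ℝ) ≤ αmin⁻¹ := inv_nonneg.mpr hα0.le
        set L : ℝ := ((k:ℕ):ℝ) - ∑ i ∈ Icc 1 k, αmin⁻¹ ^ i with hLdef
        set Uu : ℝ := ((k:ℕ):ℝ) - ∑ i ∈ Icc 1 k, βmax⁻¹ ^ i with hUdef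
        set g : S → ℝ := fun s' => ∑ a', pie s' a' * fqeAux Pb r pie (k+1) s' a' with hgdef
        have hg0 : ∀ s', 0 ≤ g s' :=
          fun s' => Finset.sum_nonneg fun a' _ => mul_nonneg (hpie0 s' a') (hf0 (k+1) s' a')
        have hdiff : Qaux P r pie (k+1) s a - fqeAux Pb r pie (k+1+1) s a
            = ∑ s', (P s a s' * Vaux P r pie (k+1) s' - Pb s a s' * g s') := by
          simp only [Qaux, fqeAux, hgdef]
          rw [Finset.sum_sub_distrib]
          ring
        have hgV : ∀ s', g s' = Vaux P r pie (k+1) s'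
            - ∑ a', pie s' a' * (Qaux P r pie k s' a' - fqeAux Pb r pie (k+1) s' a') := by
          intro s'
          rw [hVQ k s']
          rw [← Finset.sum_sub_distrib]
          refine Finset.sum_congr rfl fun a' _ => by ring
        have hd : ∀ s',
            L ≤ ∑ a', pie s' a' * (Qaux P r pie k s' a' - fqeAux Pb r pie (k+1) s' a') ∧
            (∑ a', pie s' a' * (Qaux P r pie k s' a' - fqeAux Pb r pie (k+1) s' a')) ≤ Uu := by
          intro s'
          constructor
          · calc L = ∑ a', pie s' a' * L := by rw [← Finset.sum_mul, hpie1 s', one_mul]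
              _ ≤ _ := Finset.sum_le_sum fun a' _ =>
                  mul_le_mul_of_nonneg_left (ih s' a').1 (hpie0 s' a')
          · calc (∑ a', pie s' a' * (Qaux P r pie k s' a' - fqeAux Pb r pie (k+1) s' a'))
                ≤ ∑ a', pie s' a' * Uu := Finset.sum_le_sum fun a' _ =>
                  mul_le_mul_of_nonneg_left (ih s' a').2 (hpie0 s' a')
              _ = Uu := by rw [← Finset.sum_mul, hpie1 s', one_mul]
        constructor
        · -- lower bound
          rw [hdiff]
          have hpt : ∀ s', P s a s' * ((1 - αmin⁻¹) * ((k:ℝ)+1) + αmin⁻¹ * L)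
              ≤ P s a s' * Vaux P r pie (k+1) s' - Pb s a s' * g s' := by
            intro s'
            have h1 : Pb s a s' * g s' ≤ αmin⁻¹ * P s a s' * g s' :=
              mul_le_mul_of_nonneg_right (hPb_le s a s') (hg0 s')
            have h2 : (1 - αmin⁻¹) * ((k:ℝ)+1) + αmin⁻¹ * L
                ≤ Vaux P r pie (k+1) s' - αmin⁻¹ * g s' := by
              have hVub : Vaux P r pie (k+1) s' ≤ (k:ℝ)+1 := by
                have := (hV (k+1) s').2; push_cast at this; linarith
              have hdl := (hd s').1
              rw [hgV s']
              nlinarith [mul_nonneg (by linarith : (0:ℝ) ≤ αmin⁻¹ - 1)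
                  (by linarith : (0:ℝ) ≤ (k:ℝ) + 1 - Vaux P r pie (k+1) s'),
                mul_nonneg hαi0 (sub_nonneg.mpr hdl)]
            nlinarith [hP0 s a s', mul_le_mul_of_nonneg_left h2 (hP0 s a s')]
          calc ((k+1:ℕ):ℝ) - ∑ i ∈ Icc 1 (k+1), αmin⁻¹ ^ i
              = (1 - αmin⁻¹) * ((k:ℝ)+1) + αmin⁻¹ * L := geom_step αmin⁻¹ k
            _ = ∑ s', P s a s' * ((1 - αmin⁻¹) * ((k:ℝ)+1) + αmin⁻¹ * L) := by
                rw [← Finset.sum_mul, hPsum s a, one_mul]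
            _ ≤ _ := Finset.sum_le_sum fun s' _ => hpt s'
        · -- upper bound
          rw [hdiff]
          have hpt : ∀ s', P s a s' * Vaux P r pie (k+1) s' - Pb s a s' * g s'
              ≤ P s a s' * ((1 - βmax⁻¹) * ((k:ℝ)+1) + βmax⁻¹ * Uu) := by
            intro s'
            have h1 : βmax⁻¹ * P s a s' * g s' ≤ Pb s a s' * g s' :=
              mul_le_mul_of_nonneg_right (hPb_ge s a s') (hg0 s')
            have h2 : Vaux P r pie (k+1) s' - βmax⁻¹ * g s'
                ≤ (1 - βmax⁻¹) * ((k:ℝ)+1) + βmax⁻¹ * Uu := by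
              have hVub : Vaux P r pie (k+1) s' ≤ (k:ℝ)+1 := by
                have := (hV (k+1) s').2; push_cast at this; linarith
              have hV0 := (hV (k+1) s').1
              have hdu := (hd s').2
              rw [hgV s']
              nlinarith [mul_nonneg (by linarith : (0:ℝ) ≤ 1 - βmax⁻¹)
                  (by linarith : (0:ℝ) ≤ (k:ℝ) + 1 - Vaux P r pie (k+1) s'),
                mul_nonneg hβi0 (sub_nonneg.mpr hdu)]
            nlinarith [hP0 s a s', mul_le_mul_of_nonneg_left h2 (hP0 s a s')]
          calc ∑ s', (P s a s' * Vaux P r pie (k+1) s' - Pb s a s' * g s')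
              ≤ ∑ s', P s a s' * ((1 - βmax⁻¹) * ((k:ℝ)+1) + βmax⁻¹ * Uu) :=
                Finset.sum_le_sum fun s' _ => hpt s'
            _ = (1 - βmax⁻¹) * ((k:ℝ)+1) + βmax⁻¹ * Uu := by
                rw [← Finset.sum_mul, hPsum s a, one_mul]
            _ = ((k+1:ℕ):ℝ) - ∑ i ∈ Icc 1 (k+1), βmax⁻¹ ^ i := (geom_step βmax⁻¹ k).symm
  constructor
  · intro h h1 h2 s a
    have e : H + 1 - h = (H - h) + 1 := by omega
    rw [e]
    exact key (H - h) s a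
  · intro s
    have e : H = (H - 1) + 1 := by omega
    have hsplit : Vaux P r pie H s - ∑ a, pie s a * fqeAux Pb r pie H s a
        = ∑ a, pie s a * (Qaux P r pie (H-1) s a - fqeAux Pb r pie ((H-1)+1) s a) := by
      conv_lhs => rw [e]
      rw [hVQ (H-1) s, ← Finset.sum_sub_distrib]
      refine Finset.sum_congr rfl fun a _ => by ring
    rw [hsplit]
    constructor
    · calc ((H-1:ℕ):ℝ) - ∑ i ∈ Icc 1 (H-1), αmin⁻¹ ^ i
          = ∑ a, pie s a * (((H-1:ℕ):ℝ) - ∑ i ∈ Icc 1 (H-1), αmin⁻¹ ^ i) := by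
            rw [← Finset.sum_mul, hpie1 s, one_mul]
        _ ≤ _ := Finset.sum_le_sum fun a _ =>
            mul_le_mul_of_nonneg_left (key (H-1) s a).1 (hpie0 s a)
    · calc ∑ a, pie s a * (Qaux P r pie (H-1) s a - fqeAux Pb r pie ((H-1)+1) s a)
          ≤ ∑ a, pie s a * (((H-1:ℕ):ℝ) - ∑ i ∈ Icc 1 (H-1), βmax⁻¹ ^ i) :=
            Finset.sum_le_sum fun a _ =>
              mul_le_mul_of_nonneg_left (key (H-1) s a).2 (hpie0 s a)
        _ = ((H-1:ℕ):ℝ) - ∑ i ∈ Icc 1 (H-1), βmax⁻¹ ^ i := by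
            rw [← Finset.sum_mul, hpie1 s, one_mul]
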